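/- arXiv:1506.00337 — 7 statements merged into one kernel-verified Lean document; each statement's English description precedes it below -/
import Mathlib

section
/- In any finite relation algebra whose elements are unions of atoms, if a subalgebra S (containing all atoms, closed under composition, converse, and nonempty intersection) satisfies the Helly property for triples, then composition distributes over nonempty intersection in S: for all R,T,U ∈ S with T∩U ≠ ∅, R∘(T∩U) = (R∘T)∩(R∘U) and (T∩U)∘R = (T∘R)∩(U∘R). -/
/-!
By the cycle law, an atom `γ` lies below `R ∘ X` exactly when `R⁻¹ ∘ γ` meets `X`, and below
`X ∘ R` exactly when `γ ∘ R⁻¹` meets `X`. Since `R⁻¹ ∘ γ` and `γ ∘ R⁻¹` lie in `S`, the Helly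
property says they meet `T ⊓ U` iff they meet both `T` and `U`. Hence `R ∘ (T ⊓ U)` and
`R ∘ T ⊓ R ∘ U` (and likewise on the right) have the same atoms below them, and a finite Boolean
algebra is atomic.
-/

def HasHellyProperty {α : Type*} [Lattice α] [OrderBot α] (S : Set α) : Prop :=
  ∀ R ∈ S, ∀ T ∈ S, ∀ U ∈ S, (R ⊓ T ⊓ U ≠ ⊥ ↔ R ⊓ T ≠ ⊥ ∧ R ⊓ U ≠ ⊥ ∧ T ⊓ U ≠ ⊥)

namespace HasHellyProperty

variable {α : Type*} {S : Set α} {T U : α}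

theorem inf_inf_ne_bot_iff [Lattice α] [OrderBot α] (hS : HasHellyProperty S) {P : α}
    (hP : P ∈ S) (hT : T ∈ S) (hU : U ∈ S) (hTU : T ⊓ U ≠ ⊥) :
    P ⊓ (T ⊓ U) ≠ ⊥ ↔ P ⊓ T ≠ ⊥ ∧ P ⊓ U ≠ ⊥ := by
  rw [← inf_assoc, hS P hP T hT U hU]
  exact and_congr_right fun _ => and_iff_left hTU

theorem map_inf [BooleanAlgebra α] [IsAtomic α] (hS : HasHellyProperty S) {F : α → α}
    (hF : ∀ γ, IsAtom γ → ∃ P ∈ S, ∀ X, γ ≤ F X ↔ P ⊓ X ≠ ⊥)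
    (hT : T ∈ S) (hU : U ∈ S) (hTU : T ⊓ U ≠ ⊥) :
    F (T ⊓ U) = F T ⊓ F U := by
  refine BooleanAlgebra.eq_iff_atom_le_iff.2 fun γ hγ => ?_
  obtain ⟨P, hP, hγF⟩ := hF γ hγ
  rw [le_inf_iff, hγF, hγF, hγF, hS.inf_inf_ne_bot_iff hP hT hU hTU]

end HasHellyProperty

namespace IsAtom

variable {α : Type*} [SemilatticeInf α] [OrderBot α] {comp : α → α → α} {conv : α → α}
  {γ : α}

theorem le_comp_iff_conv_comp_inf_ne_bot
    (cycle : ∀ R S T : α, comp R S ⊓ T ≠ ⊥ ↔ comp (conv R) T ⊓ S ≠ ⊥)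
    (hγ : IsAtom γ) (R X : α) : γ ≤ comp R X ↔ comp (conv R) γ ⊓ X ≠ ⊥ := by
  rw [← hγ.not_disjoint_iff_le, disjoint_iff, inf_comm, ← ne_eq, cycle]

theorem le_comp_iff_comp_conv_inf_ne_bot
    (cycle : ∀ R S T : α, comp R S ⊓ T ≠ ⊥ ↔ comp T (conv S) ⊓ R ≠ ⊥)
    (hγ : IsAtom γ) (X R : α) : γ ≤ comp X R ↔ comp γ (conv R) ⊓ X ≠ ⊥ := by
  rw [← hγ.not_disjoint_iff_le, disjoint_iff, inf_comm, ← ne_eq, cycle]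

end IsAtom

theorem helly_subalgebra_is_distributive_general
    {α : Type*} [BooleanAlgebra α] [Fintype α]
    (comp : α → α → α) (conv : α → α)
    (cycle1 : ∀ R S T : α, comp R S ⊓ T ≠ ⊥ ↔ comp (conv R) T ⊓ S ≠ ⊥)
    (cycle2 : ∀ R S T : α, comp R S ⊓ T ≠ ⊥ ↔ comp T (conv S) ⊓ R ≠ ⊥)
    (S : Set α)
    (hatoms : ∀ a : α, IsAtom a → a ∈ S)
    (hconv : ∀ a ∈ S, conv a ∈ S)
    (hcomp : ∀ a ∈ S, ∀ b ∈ S, comp a b ∈ S)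
    (hhelly : ∀ R ∈ S, ∀ T ∈ S, ∀ U ∈ S,
      (R ⊓ T ⊓ U ≠ ⊥ ↔ R ⊓ T ≠ ⊥ ∧ R ⊓ U ≠ ⊥ ∧ T ⊓ U ≠ ⊥)) :
    ∀ R ∈ S, ∀ T ∈ S, ∀ U ∈ S, T ⊓ U ≠ ⊥ →
      comp R (T ⊓ U) = comp R T ⊓ comp R U ∧
      comp (T ⊓ U) R = comp T R ⊓ comp U R := by
  intro R hR T hT U hU hTU
  have hS : HasHellyProperty S := hhelly
  constructor
  · refine hS.map_inf (F := comp R) (fun γ hγ => ?_) hT hU hTU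
    exact ⟨comp (conv R) γ, hcomp _ (hconv R hR) γ (hatoms γ hγ),
      hγ.le_comp_iff_conv_comp_inf_ne_bot cycle1 R⟩
  · refine hS.map_inf (F := (comp · R)) (fun γ hγ => ?_) hT hU hTU
    exact ⟨comp γ (conv R), hcomp γ (hatoms γ hγ) _ (hconv R hR),
      fun X => hγ.le_comp_iff_comp_conv_inf_ne_bot cycle2 X R⟩

/-- In a finite, atomistic relation algebra, if a subalgebra `S`
satisfies the Helly property for triples, then composition distributes over
nonempty intersections of elements of `S` (on both sides). -/
theorem helly_subalgebra_is_distributive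
    {α : Type*} [BooleanAlgebra α] [Fintype α]
    (atomistic : ∀ a : α, ∃ s : Finset α, (∀ b ∈ s, IsAtom b) ∧ a = s.sup id)
    (comp : α → α → α) (conv : α → α) (ident : α)
    (assoc : ∀ a b c : α, comp (comp a b) c = comp a (comp b c))
    (comp_ident : ∀ a : α, comp a ident = a)
    (cycle1 : ∀ R S T : α, comp R S ⊓ T ≠ ⊥ ↔ comp (conv R) T ⊓ S ≠ ⊥)
    (cycle2 : ∀ R S T : α, comp R S ⊓ T ≠ ⊥ ↔ comp T (conv S) ⊓ R ≠ ⊥)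
    (S : Set α)
    (hatoms : ∀ a : α, IsAtom a → a ∈ S)
    (hconv : ∀ a ∈ S, conv a ∈ S)
    (hcomp : ∀ a ∈ S, ∀ b ∈ S, comp a b ∈ S)
    (hinter : ∀ a ∈ S, ∀ b ∈ S, a ⊓ b ≠ ⊥ → a ⊓ b ∈ S)
    (hhelly : ∀ R ∈ S, ∀ T ∈ S, ∀ U ∈ S,
      (R ⊓ T ⊓ U ≠ ⊥ ↔ R ⊓ T ≠ ⊥ ∧ R ⊓ U ≠ ⊥ ∧ T ⊓ U ≠ ⊥)) :
    ∀ R ∈ S, ∀ T ∈ S, ∀ U ∈ S, T ⊓ U ≠ ⊥ →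
      comp R (T ⊓ U) = comp R T ⊓ comp R U ∧
      comp (T ⊓ U) R = comp T R ⊓ comp U R :=
  helly_subalgebra_is_distributive_general comp conv cycle1 cycle2 S hatoms hconv hcomp hhelly
end

section
/- In the Point Algebra (the Boolean algebra of relations generated by <, =, > on the real numbers, with relational composition), the subclass {∅, <, >, =, ≤, ≥, full} is closed under composition, converse, and intersection, and composition distributes over nonempty intersections of its elements. -/
/-- Relational composition of binary relations on `ℝ`. -/
def PA.comp (R S : Set (ℝ × ℝ)) : Set (ℝ × ℝ) :=
  {p | ∃ z : ℝ, (p.1, z) ∈ R ∧ (z, p.2) ∈ S}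

/-- Relational converse. -/
def PA.conv (R : Set (ℝ × ℝ)) : Set (ℝ × ℝ) := {p | (p.2, p.1) ∈ R}

def PA.lt : Set (ℝ × ℝ) := {p | p.1 < p.2}
def PA.gt : Set (ℝ × ℝ) := {p | p.2 < p.1}
def PA.eq : Set (ℝ × ℝ) := {p | p.1 = p.2}
def PA.le : Set (ℝ × ℝ) := {p | p.1 ≤ p.2}
def PA.ge : Set (ℝ × ℝ) := {p | p.2 ≤ p.1}

/-- The convex subclass {∅, <, >, =, ≤, ≥, full} of the Point Algebra. -/
def PA.convexClass : Set (Set (ℝ × ℝ)) :=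
  {∅, PA.lt, PA.gt, PA.eq, PA.le, PA.ge, Set.univ}

/-!
Every relation of the Point Algebra is `{(x, y) | compare x y ∈ s}` for a set `s` of signs.
Intersection and converse act on `s` directly. Composition distributes over unions, so it is
determined by the composition of basic relations, which on a dense order without endpoints is
the familiar table (`< ∘ < = <`, `< ∘ > = ⊤`, `= ∘ r = r`, ...). The seven relations of the
class are those whose sign set is convex for the order `< ≺ = ≺ >`, and since every basic
relation is inhabited, the encoding reflects emptiness. All claims thereby become statements
about subsets of a three-element set, which are decided by evaluation.
-/

namespace PA

/-- Composition table of the basic relations of a dense linear order without endpoints. -/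
def signComp : Ordering → Ordering → Finset Ordering
  | .eq, b => {b}
  | a, .eq => {a}
  | .lt, .lt => {.lt}
  | .gt, .gt => {.gt}
  | _, _ => Finset.univ

theorem exists_compare_eq_and_compare_eq_iff {α : Type*} [LinearOrder α] [DenselyOrdered α]
    [NoMinOrder α] [NoMaxOrder α] (a b : Ordering) (x y : α) :
    (∃ z, compare x z = a ∧ compare z y = b) ↔ compare x y ∈ signComp a b := by
  cases a <;> cases b <;>
    simp only [signComp, compare_lt_iff_lt, compare_eq_iff_eq, compare_gt_iff_gt,
      Finset.mem_singleton, Finset.mem_univ, iff_true, exists_eq_left', exists_eq_right]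
  case lt.lt => exact ⟨fun ⟨_, hxz, hzy⟩ => hxz.trans hzy, exists_between⟩
  case gt.gt => exact ⟨fun ⟨_, hzx, hyz⟩ => hyz.trans hzx, fun h => (exists_between h).imp
    fun _ h => h.symm⟩
  case lt.gt => exact (exists_gt (max x y)).imp fun _ h =>
    ⟨(le_max_left x y).trans_lt h, (le_max_right x y).trans_lt h⟩
  case gt.lt => exact (exists_lt (min x y)).imp fun _ h =>
    ⟨h.trans_le (min_le_left x y), h.trans_le (min_le_right x y)⟩

def signsComp (s t : Finset Ordering) : Finset Ordering :=
  s.biUnion fun a => t.biUnion (signComp a)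

def ofSigns (s : Finset Ordering) : Set (ℝ × ℝ) := {p | compare p.1 p.2 ∈ s}

@[simp]
theorem mem_ofSigns {s : Finset Ordering} {p : ℝ × ℝ} : p ∈ ofSigns s ↔ compare p.1 p.2 ∈ s :=
  Iff.rfl

theorem ofSigns_inter (s t : Finset Ordering) : ofSigns (s ∩ t) = ofSigns s ∩ ofSigns t := by
  ext
  simp only [mem_ofSigns, Finset.mem_inter, Set.mem_inter_iff]

theorem conv_ofSigns (s : Finset Ordering) :
    PA.conv (ofSigns s) = ofSigns (s.image Ordering.swap) := by
  ext ⟨x, y⟩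
  simp [PA.conv, Std.OrientedOrd.eq_swap (a := y) (b := x), Ordering.swap_eq_iff_eq_swap]

theorem comp_ofSigns (s t : Finset Ordering) :
    PA.comp (ofSigns s) (ofSigns t) = ofSigns (signsComp s t) := by
  ext ⟨x, y⟩
  simp only [PA.comp, mem_ofSigns, signsComp, Set.mem_ofPred_eq, Finset.mem_biUnion,
    ← exists_compare_eq_and_compare_eq_iff]
  constructor
  · rintro ⟨z, hs, ht⟩
    exact ⟨_, hs, _, ht, z, rfl, rfl⟩
  · rintro ⟨a, hs, b, ht, z, rfl, rfl⟩
    exact ⟨z, hs, ht⟩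

theorem ofSigns_eq_empty_iff (s : Finset Ordering) : ofSigns s = ∅ ↔ s = ∅ := by
  refine ⟨fun h => Finset.eq_empty_of_forall_notMem fun a ha => ?_, fun h => by simp [h, ofSigns]⟩
  obtain ⟨p, hp⟩ : ∃ p : ℝ × ℝ, compare p.1 p.2 = a := by
    cases a
    · exact ⟨(0, 1), compare_lt_iff_lt.2 one_pos⟩
    · exact ⟨(0, 0), compare_eq_iff_eq.2 rfl⟩
    · exact ⟨(1, 0), compare_gt_iff_gt.2 one_pos⟩
  exact Set.eq_empty_iff_forall_notMem.1 h p (mem_ofSigns.2 (hp ▸ ha))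

/-- Convexity for the order `lt < eq < gt`. -/
abbrev IsConvexSigns (s : Finset Ordering) : Prop := .lt ∈ s → .gt ∈ s → .eq ∈ s

theorem IsConvexSigns.inter {s t : Finset Ordering} (hs : IsConvexSigns s)
    (ht : IsConvexSigns t) : IsConvexSigns (s ∩ t) := by
  simp only [IsConvexSigns, Finset.mem_inter]
  exact fun hlt hgt => ⟨hs hlt.1 hgt.1, ht hlt.2 hgt.2⟩

theorem IsConvexSigns.image_swap {s : Finset Ordering} (hs : IsConvexSigns s) :
    IsConvexSigns (s.image Ordering.swap) := by
  revert s; decide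

theorem IsConvexSigns.signsComp {s t : Finset Ordering} (hs : IsConvexSigns s)
    (ht : IsConvexSigns t) : IsConvexSigns (signsComp s t) := by
  revert s t; decide

set_option synthInstance.maxSize 512 in
theorem signsComp_inter_right {s t u : Finset Ordering} (hs : IsConvexSigns s)
    (ht : IsConvexSigns t) (hu : IsConvexSigns u) (htu : t ∩ u ≠ ∅) :
    signsComp s (t ∩ u) = signsComp s t ∩ signsComp s u := by
  revert s t u; decide

set_option synthInstance.maxSize 512 in
theorem signsComp_inter_left {s t u : Finset Ordering} (hs : IsConvexSigns s)
    (ht : IsConvexSigns t) (hu : IsConvexSigns u) (htu : t ∩ u ≠ ∅) :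
    signsComp (t ∩ u) s = signsComp t s ∩ signsComp u s := by
  revert s t u; decide

theorem convexClass_eq_image_ofSigns :
    PA.convexClass = ofSigns '' {s | IsConvexSigns s} := by
  have ofSigns_lt : ofSigns {.lt} = PA.lt := by ext; simp [PA.lt, compare_lt_iff_lt]
  have ofSigns_gt : ofSigns {.gt} = PA.gt := by ext; simp [PA.gt, compare_gt_iff_gt]
  have ofSigns_eq : ofSigns {.eq} = PA.eq := by ext; simp [PA.eq]
  have ofSigns_le : ofSigns {.lt, .eq} = PA.le := by
    ext; simp [PA.le, compare_lt_iff_lt, le_iff_lt_or_eq]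
  have ofSigns_ge : ofSigns {.eq, .gt} = PA.ge := by
    ext ⟨x, y⟩; simp [PA.ge, compare_gt_iff_gt, le_iff_eq_or_lt, eq_comm (a := y)]
  have ofSigns_univ : ofSigns Finset.univ = Set.univ := by ext; simp
  have convex_cases : ∀ s : Finset Ordering, IsConvexSigns s → s = ∅ ∨ s = {.lt} ∨ s = {.gt} ∨
      s = {.eq} ∨ s = {.lt, .eq} ∨ s = {.eq, .gt} ∨ s = Finset.univ := by
    decide
  ext R
  constructor
  · rintro (rfl | rfl | rfl | rfl | rfl | rfl | rfl)
    exacts [⟨∅, by decide, (ofSigns_eq_empty_iff _).2 rfl⟩, ⟨_, by decide, ofSigns_lt⟩,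
      ⟨_, by decide, ofSigns_gt⟩, ⟨_, by decide, ofSigns_eq⟩, ⟨_, by decide, ofSigns_le⟩,
      ⟨_, by decide, ofSigns_ge⟩, ⟨_, by decide, ofSigns_univ⟩]
  · rintro ⟨s, hs, rfl⟩
    rcases convex_cases s hs with rfl | rfl | rfl | rfl | rfl | rfl | rfl <;>
      simp [PA.convexClass, ofSigns_eq_empty_iff, ofSigns_lt, ofSigns_gt, ofSigns_eq,
        ofSigns_le, ofSigns_ge, ofSigns_univ]

end PA

/-- the subclass {∅, <, >, =, ≤, ≥, full} of the Point Algebra is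
closed under composition, converse and intersection, and composition
distributes over nonempty intersections of its elements. -/
theorem PA_convexClass_closed_and_distributive :
    (∀ R ∈ PA.convexClass, ∀ S ∈ PA.convexClass, PA.comp R S ∈ PA.convexClass) ∧
    (∀ R ∈ PA.convexClass, PA.conv R ∈ PA.convexClass) ∧
    (∀ R ∈ PA.convexClass, ∀ S ∈ PA.convexClass, R ∩ S ∈ PA.convexClass) ∧
    (∀ R ∈ PA.convexClass, ∀ S ∈ PA.convexClass, ∀ T ∈ PA.convexClass,
      S ∩ T ≠ ∅ →
        PA.comp R (S ∩ T) = PA.comp R S ∩ PA.comp R T ∧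
        PA.comp (S ∩ T) R = PA.comp S R ∩ PA.comp T R) := by
  rw [PA.convexClass_eq_image_ofSigns]
  refine ⟨?_, ?_, ?_, ?_⟩
  · rintro _ ⟨s, hs, rfl⟩ _ ⟨t, ht, rfl⟩
    exact ⟨_, hs.signsComp ht, (PA.comp_ofSigns s t).symm⟩
  · rintro _ ⟨s, hs, rfl⟩
    exact ⟨_, hs.image_swap, (PA.conv_ofSigns s).symm⟩
  · rintro _ ⟨s, hs, rfl⟩ _ ⟨t, ht, rfl⟩
    exact ⟨_, hs.inter ht, PA.ofSigns_inter s t⟩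
  · rintro _ ⟨s, hs, rfl⟩ _ ⟨t, ht, rfl⟩ _ ⟨u, hu, rfl⟩ htu
    rw [← PA.ofSigns_inter, ne_eq, PA.ofSigns_eq_empty_iff] at htu
    simp only [← PA.ofSigns_inter, PA.comp_ofSigns, PA.signsComp_inter_right hs ht hu htu,
      PA.signsComp_inter_left hs ht hu htu, and_self]
end

section
/- In the Point Algebra, the subclass {∅, <, >, =, ≠, full} is closed under composition, converse, and intersection, and composition distributes over nonempty intersections of its elements. -/
def PA.ne : Set (ℝ × ℝ) := {p | p.1 ≠ p.2}

/-- The subclass {∅, <, >, =, ≠, full} of the Point Algebra. -/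
def PA.neClass : Set (Set (ℝ × ℝ)) :=
  {∅, PA.lt, PA.gt, PA.eq, PA.ne, Set.univ}

namespace PA

open Set

variable {R S T R' S' : Set (ℝ × ℝ)}

@[simp]
lemma mem_neClass : R ∈ neClass ↔ R = ∅ ∨ R = lt ∨ R = gt ∨ R = eq ∨ R = ne ∨ R = univ :=
  Iff.rfl

lemma comp_mono (hR : R ⊆ R') (hS : S ⊆ S') : comp R S ⊆ comp R' S' :=
  fun _ ⟨z, hxz, hzy⟩ => ⟨z, hR hxz, hS hzy⟩

@[simp]
lemma empty_comp : comp ∅ S = ∅ := by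
  simp [comp]

@[simp]
lemma comp_empty : comp R ∅ = ∅ := by
  simp [comp]

@[simp]
lemma eq_comp : comp eq S = S := by
  ext ⟨x, y⟩
  simp [comp, eq]

@[simp]
lemma comp_eq : comp R eq = R := by
  ext ⟨x, y⟩
  simp [comp, eq]

lemma comp_inter_of_subset_or_subset (h : S ⊆ T ∨ T ⊆ S) :
    comp R (S ∩ T) = comp R S ∩ comp R T := by
  rcases h with h | h
  · rw [inter_eq_left.2 h, inter_eq_left.2 (comp_mono subset_rfl h)]
  · rw [inter_eq_right.2 h, inter_eq_right.2 (comp_mono subset_rfl h)]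

lemma inter_comp_of_subset_or_subset (h : S ⊆ T ∨ T ⊆ S) :
    comp (S ∩ T) R = comp S R ∩ comp T R := by
  rcases h with h | h
  · rw [inter_eq_left.2 h, inter_eq_left.2 (comp_mono h subset_rfl)]
  · rw [inter_eq_right.2 h, inter_eq_right.2 (comp_mono h subset_rfl)]

@[simp]
lemma lt_comp_lt : comp lt lt = lt := by
  ext ⟨x, y⟩
  exact ⟨fun ⟨_, hxz, hzy⟩ => lt_trans (α := ℝ) hxz hzy, fun h => exists_between h⟩

@[simp]
lemma gt_comp_gt : comp gt gt = gt := by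
  ext ⟨x, y⟩
  exact ⟨fun ⟨_, hzx, hyz⟩ => lt_trans (α := ℝ) hyz hzx,
    fun h => (exists_between h).imp fun _ h => h.symm⟩

lemma lt_comp_gt : comp lt gt = univ :=
  eq_univ_of_forall fun ⟨x, y⟩ =>
    ⟨max x y + 1, (le_max_left x y).trans_lt (lt_add_one _),
      (le_max_right x y).trans_lt (lt_add_one _)⟩

lemma gt_comp_lt : comp gt lt = univ :=
  eq_univ_of_forall fun ⟨x, y⟩ =>
    ⟨min x y - 1, (sub_one_lt _).trans_le (min_le_left x y),
      (sub_one_lt _).trans_le (min_le_right x y)⟩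

lemma comp_eq_univ_of_lt_subset_of_gt_subset (hR : lt ⊆ R) (hS : gt ⊆ S) : comp R S = univ :=
  eq_univ_of_univ_subset (lt_comp_gt ▸ comp_mono hR hS)

lemma comp_eq_univ_of_gt_subset_of_lt_subset (hR : gt ⊆ R) (hS : lt ⊆ S) : comp R S = univ :=
  eq_univ_of_univ_subset (gt_comp_lt ▸ comp_mono hR hS)

lemma lt_subset_ne : lt ⊆ ne :=
  fun _ h => ne_of_lt h

lemma gt_subset_ne : gt ⊆ ne :=
  fun _ h => ne_of_gt h

lemma comp_mem_neClass (hR : R ∈ neClass) (hS : S ∈ neClass) : comp R S ∈ neClass := by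
  rcases mem_neClass.1 hR with rfl | rfl | rfl | rfl | rfl | rfl <;>
    rcases mem_neClass.1 hS with rfl | rfl | rfl | rfl | rfl | rfl <;>
    simp [comp_eq_univ_of_lt_subset_of_gt_subset, comp_eq_univ_of_gt_subset_of_lt_subset,
      lt_subset_ne, gt_subset_ne]

@[simp]
lemma conv_empty : conv ∅ = ∅ := rfl

@[simp]
lemma conv_univ : conv univ = univ := rfl

@[simp]
lemma conv_lt : conv lt = gt := rfl

@[simp]
lemma conv_gt : conv gt = lt := rfl

@[simp]
lemma conv_eq : conv eq = eq := by
  ext ⟨x, y⟩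
  exact eq_comm

@[simp]
lemma conv_ne : conv ne = ne := by
  ext ⟨x, y⟩
  exact ne_comm

lemma conv_mem_neClass (hR : R ∈ neClass) : conv R ∈ neClass := by
  rcases mem_neClass.1 hR with rfl | rfl | rfl | rfl | rfl | rfl <;> simp

lemma inter_eq_empty_or_subset_or_subset (hS : S ∈ neClass) (hT : T ∈ neClass) :
    S ∩ T = ∅ ∨ S ⊆ T ∨ T ⊆ S := by
  rcases mem_neClass.1 hS with rfl | rfl | rfl | rfl | rfl | rfl <;>
    rcases mem_neClass.1 hT with rfl | rfl | rfl | rfl | rfl | rfl <;>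
    grind [lt, gt, eq, ne]

lemma inter_mem_neClass (hS : S ∈ neClass) (hT : T ∈ neClass) : S ∩ T ∈ neClass := by
  rcases inter_eq_empty_or_subset_or_subset hS hT with h | h | h
  · simp [h]
  · rwa [inter_eq_left.2 h]
  · rwa [inter_eq_right.2 h]

end PA

/-- the subclass {∅, <, >, =, ≠, full} of the Point Algebra is
closed under composition, converse and intersection, and composition
distributes over nonempty intersections of its elements. -/
theorem PA_neClass_closed_and_distributive :
    (∀ R ∈ PA.neClass, ∀ S ∈ PA.neClass, PA.comp R S ∈ PA.neClass) ∧
    (∀ R ∈ PA.neClass, PA.conv R ∈ PA.neClass) ∧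
    (∀ R ∈ PA.neClass, ∀ S ∈ PA.neClass, R ∩ S ∈ PA.neClass) ∧
    (∀ R ∈ PA.neClass, ∀ S ∈ PA.neClass, ∀ T ∈ PA.neClass,
      S ∩ T ≠ ∅ →
        PA.comp R (S ∩ T) = PA.comp R S ∩ PA.comp R T ∧
        PA.comp (S ∩ T) R = PA.comp S R ∩ PA.comp T R) := by
  refine ⟨fun _ hR _ hS => PA.comp_mem_neClass hR hS, fun _ hR => PA.conv_mem_neClass hR,
    fun _ hR _ hS => PA.inter_mem_neClass hR hS, fun _ _ _ hS _ hT hST => ?_⟩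
  have hcomparable := (PA.inter_eq_empty_or_subset_or_subset hS hT).resolve_left hST
  exact ⟨PA.comp_inter_of_subset_or_subset hcomparable,
    PA.inter_comp_of_subset_or_subset hcomparable⟩
end

section
/- In the Point Algebra, no subalgebra containing both ≤ and ≠ is distributive: the three relations ≤, ≥, ≠ have pairwise nonempty intersections but empty triple intersection, so the Helly property fails for any subclass containing ≤, ≥, and ≠. -/
/-- A subclass of relations has the Helly property if triple intersections are
nonempty exactly when all pairwise intersections are. -/
def HellyProperty (S : Set (Set (ℝ × ℝ))) : Prop :=
  ∀ R ∈ S, ∀ T ∈ S, ∀ U ∈ S,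
    (R ∩ T ∩ U ≠ ∅ ↔ R ∩ T ≠ ∅ ∧ R ∩ U ≠ ∅ ∧ T ∩ U ≠ ∅)

theorem not_hellyProperty_of_inter_eq_empty {S : Set (Set (ℝ × ℝ))} {R T U : Set (ℝ × ℝ)}
    (hR : R ∈ S) (hT : T ∈ S) (hU : U ∈ S)
    (hRT : R ∩ T ≠ ∅) (hRU : R ∩ U ≠ ∅) (hTU : T ∩ U ≠ ∅) (hRTU : R ∩ T ∩ U = ∅) :
    ¬ HellyProperty S :=
  fun hS => (hS R hR T hT U hU).2 ⟨hRT, hRU, hTU⟩ hRTU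

namespace PA

theorem le_inter_ge_ne_empty : le ∩ ge ≠ ∅ :=
  Set.nonempty_iff_ne_empty.1 ⟨(0, 0), le_refl (0 : ℝ), le_refl (0 : ℝ)⟩

theorem le_inter_ne_ne_empty : le ∩ ne ≠ ∅ :=
  Set.nonempty_iff_ne_empty.1 ⟨(0, 1), zero_le_one' ℝ, zero_ne_one' ℝ⟩

theorem ge_inter_ne_ne_empty : ge ∩ ne ≠ ∅ :=
  Set.nonempty_iff_ne_empty.1 ⟨(1, 0), zero_le_one' ℝ, one_ne_zero' ℝ⟩

theorem le_inter_ge_inter_ne_eq_empty : le ∩ ge ∩ ne = ∅ :=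
  Set.eq_empty_iff_forall_notMem.2 fun _ ⟨⟨hle, hge⟩, hne⟩ => hne (le_antisymm hle hge)

end PA

/-- ≤, ≥, ≠ have pairwise nonempty intersections but empty triple
intersection, so the Helly property (and hence distributivity) fails for any
subclass of the Point Algebra containing ≤, ≥ and ≠. -/
theorem PA_no_distributive_subalgebra_with_le_and_ne :
    PA.le ∩ PA.ge ≠ ∅ ∧ PA.le ∩ PA.ne ≠ ∅ ∧ PA.ge ∩ PA.ne ≠ ∅ ∧
    PA.le ∩ PA.ge ∩ PA.ne = ∅ ∧
    ∀ S : Set (Set (ℝ × ℝ)), PA.le ∈ S → PA.ge ∈ S → PA.ne ∈ S →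
      ¬ HellyProperty S := by
  refine ⟨PA.le_inter_ge_ne_empty, PA.le_inter_ne_ne_empty, PA.ge_inter_ne_ne_empty,
    PA.le_inter_ge_inter_ne_eq_empty, fun S hle hge hne => ?_⟩
  exact not_hellyProperty_of_inter_eq_empty hle hge hne PA.le_inter_ge_ne_empty
    PA.le_inter_ne_ne_empty PA.ge_inter_ne_ne_empty PA.le_inter_ge_inter_ne_eq_empty
end

section
/- In Allen's Interval Algebra, the convex relations satisfy the Helly property: for any three convex relations R, S, T (order intervals in the conceptual neighbourhood lattice of the 13 basic relations), R∩S∩T ≠ ∅ if and only if R∩S ≠ ∅, R∩T ≠ ∅ and S∩T ≠ ∅. -/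
/-! Ligozat's coordinates embed the basic relations into `ℕ × ℕ` with an image closed under
componentwise `max`, so the neighbourhood order is a sup-semilattice. In a sup-semilattice, if
three intervals `[aᵢ, bᵢ]` meet pairwise then every `aᵢ` lies below every `bⱼ`, hence
`a₁ ⊔ a₂ ⊔ a₃` lies in all three. -/

/-- The 13 basic relations of Allen's Interval Algebra. -/
inductive Allen : Type
  | b | m | o | fi | di | s | eq | si | d | f | oi | mi | bi
  deriving DecidableEq

/-- Closed real intervals with nonempty interior, as pairs of endpoints. -/
abbrev AllenInterval := {p : ℝ × ℝ // p.1 < p.2}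

/-- Ligozat's lattice coordinates of the basic relations: the positions of the
two endpoints of `x` relative to the endpoints of `y`. -/
def Allen.coord : Allen → ℕ × ℕ
  | .b  => (0, 0)
  | .m  => (0, 1)
  | .o  => (0, 2)
  | .fi => (0, 3)
  | .di => (0, 4)
  | .s  => (1, 2)
  | .eq => (1, 3)
  | .si => (1, 4)
  | .d  => (2, 2)
  | .f  => (2, 3)
  | .oi => (2, 4)
  | .mi => (3, 4)
  | .bi => (4, 4)

/-- The conceptual neighbourhood partial (lattice) order on basic relations. -/
def Allen.le (θ₁ θ₂ : Allen) : Prop :=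
  (Allen.coord θ₁).1 ≤ (Allen.coord θ₂).1 ∧ (Allen.coord θ₁).2 ≤ (Allen.coord θ₂).2

/-- A set of basic relations is convex if it is an order interval `[θ₁, θ₂]`. -/
def Allen.Convex (R : Set Allen) : Prop :=
  ∃ θ₁ θ₂ : Allen, Allen.le θ₁ θ₂ ∧
    R = {θ | Allen.le θ₁ θ ∧ Allen.le θ θ₂}

theorem Set.Icc_inter_Icc_inter_Icc_nonempty_iff {α : Type*} [SemilatticeSup α]
    {a b c d e f : α} :
    (Set.Icc a b ∩ Set.Icc c d ∩ Set.Icc e f).Nonempty ↔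
      (Set.Icc a b ∩ Set.Icc c d).Nonempty ∧ (Set.Icc a b ∩ Set.Icc e f).Nonempty ∧
        (Set.Icc c d ∩ Set.Icc e f).Nonempty := by
  refine ⟨fun ⟨x, ⟨hab, hcd⟩, hef⟩ => ⟨⟨x, hab, hcd⟩, ⟨x, hab, hef⟩, ⟨x, hcd, hef⟩⟩, ?_⟩
  rintro ⟨⟨x, ⟨hax, hxb⟩, hcx, hxd⟩, ⟨y, ⟨hay, hyb⟩, hey, hyf⟩, ⟨z, ⟨hcz, hzd⟩, hez, hzf⟩⟩
  refine ⟨a ⊔ c ⊔ e, ⟨⟨le_sup_left.trans le_sup_left, ?_⟩, le_sup_right.trans le_sup_left, ?_⟩,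
    le_sup_right, ?_⟩
  · exact sup_le (sup_le (hax.trans hxb) (hcx.trans hxb)) (hey.trans hyb)
  · exact sup_le (sup_le (hax.trans hxd) (hcx.trans hxd)) (hez.trans hzd)
  · exact sup_le (sup_le (hay.trans hyf) (hcz.trans hzf)) (hey.trans hyf)

namespace Allen

instance : Fintype Allen :=
  Fintype.ofList [b, m, o, fi, di, s, eq, si, d, f, oi, mi, bi] (by intro x; cases x <;> simp)

theorem coord_injective : Function.Injective coord := by
  unfold Function.Injective; decide

theorem exists_coord_eq_sup (θ₁ θ₂ : Allen) : ∃ θ : Allen, θ.coord = θ₁.coord ⊔ θ₂.coord := by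
  revert θ₁ θ₂; decide

instance : LE Allen := ⟨Allen.le⟩

instance : LT Allen := ⟨fun θ₁ θ₂ => θ₁.coord < θ₂.coord⟩

noncomputable instance : Max Allen := ⟨fun θ₁ θ₂ => (exists_coord_eq_sup θ₁ θ₂).choose⟩

noncomputable instance : SemilatticeSup Allen :=
  coord_injective.semilatticeSup _ Iff.rfl Iff.rfl
    fun θ₁ θ₂ => (exists_coord_eq_sup θ₁ θ₂).choose_spec

theorem convex_iff {R : Set Allen} : Allen.Convex R ↔ ∃ l u : Allen, l ≤ u ∧ R = Set.Icc l u :=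
  Iff.rfl

end Allen

/-- the convex relations of Allen's Interval Algebra (order
intervals in the conceptual neighbourhood lattice) satisfy the Helly property. -/
theorem Allen_convex_helly (R S T : Set Allen)
    (hR : Allen.Convex R) (hS : Allen.Convex S) (hT : Allen.Convex T) :
    (R ∩ S ∩ T).Nonempty ↔
      (R ∩ S).Nonempty ∧ (R ∩ T).Nonempty ∧ (S ∩ T).Nonempty := by
  obtain ⟨l₁, u₁, -, rfl⟩ := Allen.convex_iff.mp hR
  obtain ⟨l₂, u₂, -, rfl⟩ := Allen.convex_iff.mp hS
  obtain ⟨l₃, u₃, -, rfl⟩ := Allen.convex_iff.mp hT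
  exact Set.Icc_inter_Icc_inter_Icc_nonempty_iff
end

section
/- Let A be a relation algebra, S a distributive subalgebra with the Helly property. Suppose a network over S is path consistent on a complete graph over variables {v_{k+1},…,vₙ} ∪ F ∪ {v_j} where F ∪ {v_{n-i}} and F ∪ {v_j} induce complete path consistent subnetworks. Define R_{n-i,j} = ⋂_{k ∈ F} R_{n-i,k}∘R_{k,j}. Then R_{n-i,j} ≠ 0, and for every k' ∈ F: R_{n-i,k'} ≤ R_{n-i,j}∘R_{j,k'}, R_{n-i,j} ≤ R_{n-i,k'}∘R_{k',j}, and R_{k',j} ≤ R_{k',n-i}∘R_{n-i,j}. -/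
/-!
Write `g k = R_{u,k} ∘ R_{k,j}` for `k ∈ F`. Path consistency of the two cliques lets every
triangle be refined through a further vertex: `R_{k,j} ≤ R_{k,k'} ∘ R_{k',j}` and
`R_{k,k'} ≤ R_{k,u} ∘ R_{u,k'}` give `R_{k,j} ≤ R_{k,u} ∘ g k'`, which by the cycle law says
`g k ⊓ g k' ≠ 0`. The Helly property turns these pairwise intersections into `⋂_k g k ≠ 0`, and
then distributivity lets composition with `R_{j,k'}` or `R_{k',u}` pass through the intersection,
so each triangle inequality reduces to one refinement per `k ∈ F`.
-/

open Finset

section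

variable {α : Type*} [BooleanAlgebra α]

def CompDistribOn (comp : α → α → α) (S : Set α) : Prop :=
  ∀ R ∈ S, ∀ T ∈ S, ∀ U ∈ S, T ⊓ U ≠ ⊥ →
    comp R (T ⊓ U) = comp R T ⊓ comp R U ∧ comp (T ⊓ U) R = comp T R ⊓ comp U R

def HellyOn (S : Set α) : Prop :=
  ∀ (m : ℕ) (f : Fin m → α), (∀ i, f i ∈ S) →
    (∀ i j, i ≠ j → f i ⊓ f j ≠ ⊥) → Finset.univ.inf f ≠ ⊥

def PathConsistentOn {ι : Type*} (comp : α → α → α) (Rel : ι → ι → α) (T : Finset ι) : Prop :=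
  ∀ a ∈ T, ∀ b ∈ T, ∀ c ∈ T, Rel a b ≤ comp (Rel a c) (Rel c b)

variable {comp : α → α → α} {S : Set α} {β : Type*}

theorem comp_inf_ne_bot_of_le_comp_conv {conv : α → α}
    (cycle : ∀ a b c : α, comp a b ⊓ c ≠ ⊥ ↔ comp (conv a) c ⊓ b ≠ ⊥)
    {a b c : α} (h : b ≤ comp (conv a) c) (hb : b ≠ ⊥) : comp a b ⊓ c ≠ ⊥ :=
  (cycle a b c).2 (by rwa [inf_eq_right.2 h])

theorem HellyOn.finset_inf_ne_bot (hS : HellyOn S) {T : Finset β} {g : β → α}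
    (hg : ∀ k ∈ T, g k ∈ S) (hpair : ∀ k ∈ T, ∀ k' ∈ T, k ≠ k' → g k ⊓ g k' ≠ ⊥) :
    T.inf g ≠ ⊥ := by
  let e := T.equivFin
  have hFin := hS T.card (fun i => g (e.symm i)) (fun i => hg _ (e.symm i).2)
    fun i i' hii' => hpair _ (e.symm i).2 _ (e.symm i').2
      (Subtype.val_injective.ne (e.symm.injective.ne hii'))
  refine ne_bot_of_le_ne_bot hFin (Finset.le_inf fun k hk => ?_)
  simpa [e] using inf_le (f := fun i => g (e.symm i)) (mem_univ (e ⟨k, hk⟩))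

theorem finset_inf_mem_of_ne_bot (hinter : ∀ a ∈ S, ∀ b ∈ S, a ⊓ b ≠ ⊥ → a ⊓ b ∈ S)
    {T : Finset β} (hT : T.Nonempty) {g : β → α} (hg : ∀ k ∈ T, g k ∈ S)
    (hne : T.inf g ≠ ⊥) : T.inf g ∈ S := by
  induction hT using Finset.Nonempty.cons_induction with
  | singleton a => simpa using hg a (mem_singleton_self a)
  | cons a T ha hT ih =>
    rw [inf_cons] at hne ⊢
    exact hinter _ (hg a (mem_cons_self a T)) _
      (ih (fun k hk => hg k (mem_cons_of_mem hk)) (ne_bot_of_le_ne_bot hne inf_le_right)) hne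

namespace CompDistribOn

theorem comp_mono_left (hd : CompDistribOn comp S) {a b c : α} (ha : a ∈ S) (hb : b ∈ S)
    (hc : c ∈ S) (ha₀ : a ≠ ⊥) (hab : a ≤ b) : comp a c ≤ comp b c := by
  have h := (hd c hc a ha b hb (by rwa [inf_eq_left.2 hab])).2
  rw [inf_eq_left.2 hab] at h
  exact inf_eq_left.1 h.symm

theorem comp_mono_right (hd : CompDistribOn comp S) {a b c : α} (ha : a ∈ S) (hb : b ∈ S)
    (hc : c ∈ S) (ha₀ : a ≠ ⊥) (hab : a ≤ b) : comp c a ≤ comp c b := by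
  have h := (hd c hc a ha b hb (by rwa [inf_eq_left.2 hab])).1
  rw [inf_eq_left.2 hab] at h
  exact inf_eq_left.1 h.symm

theorem finset_inf_comp (hd : CompDistribOn comp S)
    (hinter : ∀ a ∈ S, ∀ b ∈ S, a ⊓ b ≠ ⊥ → a ⊓ b ∈ S) {T : Finset β} (hT : T.Nonempty)
    {g : β → α} (hg : ∀ k ∈ T, g k ∈ S) (hne : T.inf g ≠ ⊥) {c : α} (hc : c ∈ S) :
    comp (T.inf g) c = T.inf fun k => comp (g k) c := by
  induction hT using Finset.Nonempty.cons_induction with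
  | singleton a => simp
  | cons a T ha hT ih =>
    have hgT : ∀ k ∈ T, g k ∈ S := fun k hk => hg k (mem_cons_of_mem hk)
    rw [inf_cons] at hne
    have hneT := ne_bot_of_le_ne_bot hne inf_le_right
    rw [inf_cons, inf_cons, ← ih hgT hneT,
      (hd c hc _ (hg a (mem_cons_self a T)) _ (finset_inf_mem_of_ne_bot hinter hT hgT hneT) hne).2]

theorem comp_finset_inf (hd : CompDistribOn comp S)
    (hinter : ∀ a ∈ S, ∀ b ∈ S, a ⊓ b ≠ ⊥ → a ⊓ b ∈ S) {T : Finset β} (hT : T.Nonempty)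
    {g : β → α} (hg : ∀ k ∈ T, g k ∈ S) (hne : T.inf g ≠ ⊥) {c : α} (hc : c ∈ S) :
    comp c (T.inf g) = T.inf fun k => comp c (g k) := by
  induction hT using Finset.Nonempty.cons_induction with
  | singleton a => simp
  | cons a T ha hT ih =>
    have hgT : ∀ k ∈ T, g k ∈ S := fun k hk => hg k (mem_cons_of_mem hk)
    rw [inf_cons] at hne
    have hneT := ne_bot_of_le_ne_bot hne inf_le_right
    rw [inf_cons, inf_cons, ← ih hgT hneT,
      (hd c hc _ (hg a (mem_cons_self a T)) _ (finset_inf_mem_of_ne_bot hinter hT hgT hneT) hne).1]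

end CompDistribOn

section Network

variable {ι : Type*} [DecidableEq ι] {Rel : ι → ι → α} {F : Finset ι} {u j k k' : ι}

theorem PathConsistentOn.rel_le_comp_rel_comp
    (assoc : ∀ a b c : α, comp (comp a b) c = comp a (comp b c)) (hd : CompDistribOn comp S)
    (hcomp : ∀ a ∈ S, ∀ b ∈ S, comp a b ∈ S) (hnonzero : ∀ a ∈ S, a ≠ ⊥)
    (hRS : ∀ a b, Rel a b ∈ S) (hpcu : PathConsistentOn comp Rel (insert u F))
    (hpcj : PathConsistentOn comp Rel (insert j F)) (hk : k ∈ F) (hk' : k' ∈ F) :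
    Rel k j ≤ comp (Rel k u) (comp (Rel u k') (Rel k' j)) :=
  calc Rel k j ≤ comp (Rel k k') (Rel k' j) :=
        hpcj k (mem_insert_of_mem hk) j (mem_insert_self j F) k' (mem_insert_of_mem hk')
    _ ≤ comp (comp (Rel k u) (Rel u k')) (Rel k' j) :=
        hd.comp_mono_left (hRS k k') (hcomp _ (hRS k u) _ (hRS u k')) (hRS k' j)
          (hnonzero _ (hRS k k'))
          (hpcu k (mem_insert_of_mem hk) k' (mem_insert_of_mem hk') u (mem_insert_self u F))
    _ = comp (Rel k u) (comp (Rel u k') (Rel k' j)) := assoc _ _ _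

theorem PathConsistentOn.rel_le_comp_comp_rel
    (assoc : ∀ a b c : α, comp (comp a b) c = comp a (comp b c)) (hd : CompDistribOn comp S)
    (hcomp : ∀ a ∈ S, ∀ b ∈ S, comp a b ∈ S) (hnonzero : ∀ a ∈ S, a ≠ ⊥)
    (hRS : ∀ a b, Rel a b ∈ S) (hpcu : PathConsistentOn comp Rel (insert u F))
    (hpcj : PathConsistentOn comp Rel (insert j F)) (hk : k ∈ F) (hk' : k' ∈ F) :
    Rel u k' ≤ comp (comp (Rel u k) (Rel k j)) (Rel j k') :=
  calc Rel u k' ≤ comp (Rel u k) (Rel k k') :=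
        hpcu u (mem_insert_self u F) k' (mem_insert_of_mem hk') k (mem_insert_of_mem hk)
    _ ≤ comp (Rel u k) (comp (Rel k j) (Rel j k')) :=
        hd.comp_mono_right (hRS k k') (hcomp _ (hRS k j) _ (hRS j k')) (hRS u k)
          (hnonzero _ (hRS k k'))
          (hpcj k (mem_insert_of_mem hk) k' (mem_insert_of_mem hk') j (mem_insert_self j F))
    _ = comp (comp (Rel u k) (Rel k j)) (Rel j k') := (assoc _ _ _).symm

end Network

end

theorem ppc_fill_in_general
    {α : Type*} [BooleanAlgebra α]
    (comp : α → α → α) (conv : α → α)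
    (assoc : ∀ a b c : α, comp (comp a b) c = comp a (comp b c))
    (cycle1 : ∀ R S T : α, comp R S ⊓ T ≠ ⊥ ↔ comp (conv R) T ⊓ S ≠ ⊥)
    (S : Set α)
    (hcomp : ∀ a ∈ S, ∀ b ∈ S, comp a b ∈ S)
    (hinter : ∀ a ∈ S, ∀ b ∈ S, a ⊓ b ≠ ⊥ → a ⊓ b ∈ S)
    (hnonzero : ∀ a ∈ S, a ≠ ⊥)
    (hdist : ∀ R ∈ S, ∀ T ∈ S, ∀ U ∈ S, T ⊓ U ≠ ⊥ →
      comp R (T ⊓ U) = comp R T ⊓ comp R U ∧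
      comp (T ⊓ U) R = comp T R ⊓ comp U R)
    (hhelly : ∀ (m : ℕ) (f : Fin m → α), (∀ i, f i ∈ S) →
      (∀ i j, i ≠ j → f i ⊓ f j ≠ ⊥) → Finset.univ.inf f ≠ ⊥)
    -- the network, on an index type ι
    {ι : Type*} [DecidableEq ι]
    (Rel : ι → ι → α)
    (hRS : ∀ a b, Rel a b ∈ S)
    (hRsym : ∀ a b, Rel b a = conv (Rel a b))
    -- the missing edge {u, j} and its common neighbourhood F
    (F : Finset ι) (u j : ι)
    -- the subnetworks induced by F ∪ {u} and F ∪ {j} are complete and path consistent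
    (hpcu : ∀ a ∈ insert u F, ∀ b ∈ insert u F, ∀ c ∈ insert u F,
      Rel a b ≤ comp (Rel a c) (Rel c b))
    (hpcj : ∀ a ∈ insert j F, ∀ b ∈ insert j F, ∀ c ∈ insert j F,
      Rel a b ≤ comp (Rel a c) (Rel c b)) :
    (F.inf (fun k => comp (Rel u k) (Rel k j)) ≠ ⊥) ∧
    (∀ k' ∈ F,
      Rel u k' ≤ comp (F.inf (fun k => comp (Rel u k) (Rel k j))) (Rel j k') ∧
      F.inf (fun k => comp (Rel u k) (Rel k j)) ≤ comp (Rel u k') (Rel k' j) ∧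
      Rel k' j ≤ comp (Rel k' u) (F.inf (fun k => comp (Rel u k) (Rel k j)))) := by
  have hthrough : ∀ k ∈ F, ∀ k' ∈ F,
      Rel k j ≤ comp (Rel k u) (comp (Rel u k') (Rel k' j)) := fun k hk k' hk' =>
    PathConsistentOn.rel_le_comp_rel_comp assoc hdist hcomp hnonzero hRS hpcu hpcj hk hk'
  have hgS : ∀ k ∈ F, comp (Rel u k) (Rel k j) ∈ S := fun k _ => hcomp _ (hRS u k) _ (hRS k j)
  have hne : F.inf (fun k => comp (Rel u k) (Rel k j)) ≠ ⊥ :=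
    HellyOn.finset_inf_ne_bot hhelly hgS fun k hk k' hk' _ =>
      comp_inf_ne_bot_of_le_comp_conv cycle1 (hRsym u k ▸ hthrough k hk k' hk')
        (hnonzero _ (hRS k j))
  refine ⟨hne, fun k' hk' => ⟨?_, inf_le hk', ?_⟩⟩
  · rw [CompDistribOn.finset_inf_comp hdist hinter ⟨k', hk'⟩ hgS hne (hRS j k')]
    exact Finset.le_inf fun k hk =>
      PathConsistentOn.rel_le_comp_comp_rel assoc hdist hcomp hnonzero hRS hpcu hpcj hk hk'
  · rw [CompDistribOn.comp_finset_inf hdist hinter ⟨k', hk'⟩ hgS hne (hRS k' u)]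
    exact Finset.le_inf fun k hk => hthrough k' hk' k hk

/-- the fill-in step of partial path consistency. For a network
over a distributive (Helly) subalgebra that is path consistent on the complete
subgraphs induced by `F ∪ {u}` and `F ∪ {j}` (where `F` is the common
neighbourhood of the missing edge `{u, j}`), the label
`R_{u,j} = ⨅_{k ∈ F} R_{u,k} ∘ R_{k,j}` is nonzero and keeps every triangle
through a vertex `k' ∈ F` path consistent. -/
theorem ppc_fill_in
    {α : Type*} [BooleanAlgebra α]
    (comp : α → α → α) (conv : α → α) (ident : α)
    (assoc : ∀ a b c : α, comp (comp a b) c = comp a (comp b c))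
    (comp_ident : ∀ a : α, comp a ident = a)
    (cycle1 : ∀ R S T : α, comp R S ⊓ T ≠ ⊥ ↔ comp (conv R) T ⊓ S ≠ ⊥)
    (cycle2 : ∀ R S T : α, comp R S ⊓ T ≠ ⊥ ↔ comp T (conv S) ⊓ R ≠ ⊥)
    (S : Set α)
    (hconv : ∀ a ∈ S, conv a ∈ S)
    (hcomp : ∀ a ∈ S, ∀ b ∈ S, comp a b ∈ S)
    (hinter : ∀ a ∈ S, ∀ b ∈ S, a ⊓ b ≠ ⊥ → a ⊓ b ∈ S)
    (hnonzero : ∀ a ∈ S, a ≠ ⊥)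
    (hdist : ∀ R ∈ S, ∀ T ∈ S, ∀ U ∈ S, T ⊓ U ≠ ⊥ →
      comp R (T ⊓ U) = comp R T ⊓ comp R U ∧
      comp (T ⊓ U) R = comp T R ⊓ comp U R)
    (hhelly : ∀ (m : ℕ) (f : Fin m → α), (∀ i, f i ∈ S) →
      (∀ i j, i ≠ j → f i ⊓ f j ≠ ⊥) → Finset.univ.inf f ≠ ⊥)
    -- the network, on an index type ι
    {ι : Type*} [DecidableEq ι]
    (Rel : ι → ι → α)
    (hRS : ∀ a b, Rel a b ∈ S)
    (hRsym : ∀ a b, Rel b a = conv (Rel a b))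
    -- the missing edge {u, j} and its common neighbourhood F
    (F : Finset ι) (u j : ι) (hF : F.Nonempty) (huj : u ≠ j)
    (huF : u ∉ F) (hjF : j ∉ F)
    -- the subnetworks induced by F ∪ {u} and F ∪ {j} are complete and path consistent
    (hpcu : ∀ a ∈ insert u F, ∀ b ∈ insert u F, ∀ c ∈ insert u F,
      Rel a b ≤ comp (Rel a c) (Rel c b))
    (hpcj : ∀ a ∈ insert j F, ∀ b ∈ insert j F, ∀ c ∈ insert j F,
      Rel a b ≤ comp (Rel a c) (Rel c b)) :
    (F.inf (fun k => comp (Rel u k) (Rel k j)) ≠ ⊥) ∧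
    (∀ k' ∈ F,
      Rel u k' ≤ comp (F.inf (fun k => comp (Rel u k) (Rel k j))) (Rel j k') ∧
      F.inf (fun k => comp (Rel u k) (Rel k j)) ≤ comp (Rel u k') (Rel k' j) ∧
      Rel k' j ≤ comp (Rel k' u) (F.inf (fun k => comp (Rel u k) (Rel k j)))) :=
  ppc_fill_in_general comp conv assoc cycle1 S hcomp hinter hnonzero hdist hhelly Rel hRS hRsym F u
    j hpcu hpcj
end

section
/- In the product Point Algebra (Cardinal Relation Algebra), the four subclasses C_PA⊗C_PA, C_PA⊗S_PA, S_PA⊗C_PA, S_PA⊗S_PA — where C_PA = {∅,<,>,=,≤,≥,⋆} and S_PA = {∅,<,>,=,≠,⋆} — are each closed under componentwise composition, converse, and intersection, and composition distributes over nonempty intersections in each. -/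
/-!
A PA relation on a dense linear order without endpoints is a union of the three basic relations
`<`, `=`, `>`, and composition, converse and intersection act on such unions through the basic
relations alone. So `C_PA` and `S_PA` correspond to finite families of sets of basic relations,
and both closure and distributivity become finite computations. Since all operations on
`R ⊗ S` are componentwise, and `R ⊗ S` is nonempty only if `R` and `S` are, both properties pass
from the factors to the products.
-/

/-- Relational composition of binary relations on the plane ℝ². -/
def CRA.comp (R S : Set ((ℝ × ℝ) × (ℝ × ℝ))) : Set ((ℝ × ℝ) × (ℝ × ℝ)) :=
  {p | ∃ z : ℝ × ℝ, (p.1, z) ∈ R ∧ (z, p.2) ∈ S}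

def CRA.conv (R : Set ((ℝ × ℝ) × (ℝ × ℝ))) : Set ((ℝ × ℝ) × (ℝ × ℝ)) :=
  {p | (p.2, p.1) ∈ R}

/-- The maximal distributive subalgebra C_PA = {∅,<,>,=,≤,≥,⋆} of PA. -/
def CPA : Set (Set (ℝ × ℝ)) := {∅, PA.lt, PA.gt, PA.eq, PA.le, PA.ge, Set.univ}

/-- The maximal distributive subalgebra S_PA = {∅,<,>,=,≠,⋆} of PA. -/
def SPA : Set (Set (ℝ × ℝ)) := {∅, PA.lt, PA.gt, PA.eq, PA.ne, Set.univ}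

/-- The product relation R⊗S on points of the plane: the x-coordinates are
related by R and the y-coordinates by S. -/
def CRA.prodRel (R S : Set (ℝ × ℝ)) : Set ((ℝ × ℝ) × (ℝ × ℝ)) :=
  {p | (p.1.1, p.2.1) ∈ R ∧ (p.1.2, p.2.2) ∈ S}

/-- The product subclass D₁ ⊗ D₂ of the Cardinal Relation Algebra PA⊗PA. -/
def CRA.prodClass (D₁ D₂ : Set (Set (ℝ × ℝ))) : Set (Set ((ℝ × ℝ) × (ℝ × ℝ))) :=
  {X | ∃ R ∈ D₁, ∃ S ∈ D₂, X = CRA.prodRel R S}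

open SetRel

structure IsDistributiveSubalgebra {α : Type*} (D : Set (SetRel α α)) : Prop where
  comp_mem : ∀ R ∈ D, ∀ S ∈ D, R ○ S ∈ D
  inv_mem : ∀ R ∈ D, R.inv ∈ D
  inter_mem : ∀ R ∈ D, ∀ S ∈ D, R ∩ S ∈ D
  comp_inter : ∀ R ∈ D, ∀ S ∈ D, ∀ T ∈ D, (S ∩ T).Nonempty → R ○ (S ∩ T) = (R ○ S) ∩ (R ○ T)
  inter_comp : ∀ R ∈ D, ∀ S ∈ D, ∀ T ∈ D, (S ∩ T).Nonempty → (S ∩ T) ○ R = (S ○ R) ∩ (T ○ R)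

namespace PA

/-- Composition table of the basic relations `<`, `=`, `>` (encoded as `.lt`, `.eq`, `.gt`) of a
dense linear order without endpoints. -/
def basicComp : Ordering → Ordering → Finset Ordering
  | .eq, b => {b}
  | a, .eq => {a}
  | .lt, .lt => {.lt}
  | .gt, .gt => {.gt}
  | _, _ => Finset.univ

def atomsComp (s t : Finset Ordering) : Finset Ordering :=
  s.biUnion fun a => t.biUnion (basicComp a)

section Atoms

variable {α : Type*} [LinearOrder α]

def ofAtoms (s : Finset Ordering) : SetRel α α := {p | compare p.1 p.2 ∈ s}

theorem exists_compare_eq_compare_eq_iff [DenselyOrdered α] [NoMinOrder α] [NoMaxOrder α]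
    (a b : Ordering) (x y : α) :
    (∃ z, compare x z = a ∧ compare z y = b) ↔ compare x y ∈ basicComp a b := by
  cases a <;> cases b <;> simp [basicComp, compare_lt_iff_lt, compare_gt_iff_gt]
  case lt.lt => exact ⟨fun ⟨z, hxz, hzy⟩ => hxz.trans hzy, exists_between⟩
  case lt.gt => simpa using exists_gt (max x y)
  case gt.lt => simpa using exists_lt (min x y)
  case gt.gt =>
    exact ⟨fun ⟨z, hzx, hyz⟩ => hyz.trans hzx, fun h => (exists_between h).imp fun _ h => h.symm⟩

theorem ofAtoms_comp_ofAtoms [DenselyOrdered α] [NoMinOrder α] [NoMaxOrder α]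
    (s t : Finset Ordering) : (ofAtoms s ○ ofAtoms t : SetRel α α) = ofAtoms (atomsComp s t) := by
  ext ⟨x, y⟩
  simp only [mem_comp, ofAtoms, atomsComp, Set.mem_ofPred_eq, Finset.mem_biUnion,
    ← exists_compare_eq_compare_eq_iff]
  constructor
  · rintro ⟨z, hs, ht⟩
    exact ⟨_, hs, _, ht, z, rfl, rfl⟩
  · rintro ⟨a, ha, b, hb, z, rfl, rfl⟩
    exact ⟨z, ha, hb⟩

theorem inv_ofAtoms (s : Finset Ordering) :
    (ofAtoms s : SetRel α α).inv = ofAtoms (s.image Ordering.swap) := by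
  ext ⟨x, y⟩
  simp [ofAtoms, Std.OrientedOrd.eq_swap (a := x)]

theorem ofAtoms_inter_ofAtoms (s t : Finset Ordering) :
    (ofAtoms s ∩ ofAtoms t : SetRel α α) = ofAtoms (s ∩ t) := by
  ext
  simp [ofAtoms]

theorem nonempty_of_ofAtoms_nonempty {s : Finset Ordering}
    (h : (ofAtoms s : SetRel α α).Nonempty) : s.Nonempty :=
  let ⟨_, hp⟩ := h
  ⟨_, hp⟩

theorem isDistributiveSubalgebra_image_ofAtoms [DenselyOrdered α] [NoMinOrder α] [NoMaxOrder α]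
    (C : Finset (Finset Ordering))
    (hcomp : ∀ s ∈ C, ∀ t ∈ C, atomsComp s t ∈ C)
    (hinv : ∀ s ∈ C, s.image Ordering.swap ∈ C)
    (hinter : ∀ s ∈ C, ∀ t ∈ C, s ∩ t ∈ C)
    (hcomp_inter : ∀ r ∈ C, ∀ s ∈ C, ∀ t ∈ C, (s ∩ t).Nonempty →
      atomsComp r (s ∩ t) = atomsComp r s ∩ atomsComp r t)
    (hinter_comp : ∀ r ∈ C, ∀ s ∈ C, ∀ t ∈ C, (s ∩ t).Nonempty →
      atomsComp (s ∩ t) r = atomsComp s r ∩ atomsComp t r) :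
    IsDistributiveSubalgebra (ofAtoms '' (C : Set (Finset Ordering)) : Set (SetRel α α)) where
  comp_mem := by
    rintro _ ⟨s, hs, rfl⟩ _ ⟨t, ht, rfl⟩
    exact ⟨_, hcomp s hs t ht, (ofAtoms_comp_ofAtoms s t).symm⟩
  inv_mem := by
    rintro _ ⟨s, hs, rfl⟩
    exact ⟨_, hinv s hs, (inv_ofAtoms s).symm⟩
  inter_mem := by
    rintro _ ⟨s, hs, rfl⟩ _ ⟨t, ht, rfl⟩
    exact ⟨_, hinter s hs t ht, (ofAtoms_inter_ofAtoms s t).symm⟩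
  comp_inter := by
    rintro _ ⟨r, hr, rfl⟩ _ ⟨s, hs, rfl⟩ _ ⟨t, ht, rfl⟩ hne
    rw [ofAtoms_inter_ofAtoms] at hne ⊢
    rw [ofAtoms_comp_ofAtoms, ofAtoms_comp_ofAtoms, ofAtoms_comp_ofAtoms, ofAtoms_inter_ofAtoms,
      hcomp_inter r hr s hs t ht (nonempty_of_ofAtoms_nonempty hne)]
  inter_comp := by
    rintro _ ⟨r, hr, rfl⟩ _ ⟨s, hs, rfl⟩ _ ⟨t, ht, rfl⟩ hne
    rw [ofAtoms_inter_ofAtoms] at hne ⊢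
    rw [ofAtoms_comp_ofAtoms, ofAtoms_comp_ofAtoms, ofAtoms_comp_ofAtoms, ofAtoms_inter_ofAtoms,
      hinter_comp r hr s hs t ht (nonempty_of_ofAtoms_nonempty hne)]

end Atoms

def cpaAtoms : Finset (Finset Ordering) :=
  {∅, {.lt}, {.gt}, {.eq}, {.lt, .eq}, {.gt, .eq}, Finset.univ}

def spaAtoms : Finset (Finset Ordering) :=
  {∅, {.lt}, {.gt}, {.eq}, {.lt, .gt}, Finset.univ}

theorem CPA_eq_image_ofAtoms :
    CPA = (ofAtoms '' (cpaAtoms : Set (Finset Ordering)) : Set (SetRel ℝ ℝ)) := by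
  simp only [CPA, cpaAtoms, Finset.coe_insert, Finset.coe_singleton, Set.image_insert_eq,
    Set.image_singleton]
  congr <;> ext ⟨x, y⟩ <;>
    simp [ofAtoms, PA.lt, PA.gt, PA.eq, PA.le, PA.ge, compare_lt_iff_lt, compare_gt_iff_gt,
      le_iff_lt_or_eq, @eq_comm _ x y]

theorem SPA_eq_image_ofAtoms :
    SPA = (ofAtoms '' (spaAtoms : Set (Finset Ordering)) : Set (SetRel ℝ ℝ)) := by
  simp only [SPA, spaAtoms, Finset.coe_insert, Finset.coe_singleton, Set.image_insert_eq,
    Set.image_singleton]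
  congr <;> ext ⟨x, y⟩ <;>
    simp [ofAtoms, PA.lt, PA.gt, PA.eq, PA.ne, compare_lt_iff_lt, compare_gt_iff_gt,
      lt_or_lt_iff_ne]

theorem isDistributiveSubalgebra_CPA : IsDistributiveSubalgebra CPA := by
  rw [CPA_eq_image_ofAtoms]
  apply isDistributiveSubalgebra_image_ofAtoms <;> decide

theorem isDistributiveSubalgebra_SPA : IsDistributiveSubalgebra SPA := by
  rw [SPA_eq_image_ofAtoms]
  apply isDistributiveSubalgebra_image_ofAtoms <;> decide

end PA

namespace CRA

theorem prodRel_comp_prodRel (A B C D : SetRel ℝ ℝ) :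
    prodRel A B ○ prodRel C D = prodRel (A ○ C) (B ○ D) := by
  ext ⟨⟨x₁, x₂⟩, y₁, y₂⟩
  constructor
  · rintro ⟨z, ⟨hA, hB⟩, hC, hD⟩
    exact ⟨⟨z.1, hA, hC⟩, z.2, hB, hD⟩
  · rintro ⟨⟨z₁, hA, hC⟩, z₂, hB, hD⟩
    exact ⟨(z₁, z₂), ⟨hA, hB⟩, hC, hD⟩

theorem inv_prodRel (A B : SetRel ℝ ℝ) : SetRel.inv (prodRel A B) = prodRel A.inv B.inv := rfl

theorem prodRel_inter_prodRel (A B C D : SetRel ℝ ℝ) :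
    prodRel A B ∩ prodRel C D = prodRel (A ∩ C) (B ∩ D) := by
  ext
  simp only [prodRel, Set.mem_inter_iff, Set.mem_ofPred_eq]
  tauto

theorem nonempty_of_prodRel_nonempty {A B : SetRel ℝ ℝ} (h : (prodRel A B).Nonempty) :
    A.Nonempty ∧ B.Nonempty :=
  let ⟨_, hA, hB⟩ := h
  ⟨⟨_, hA⟩, _, hB⟩

theorem isDistributiveSubalgebra_prodClass {D₁ D₂ : Set (SetRel ℝ ℝ)}
    (h₁ : IsDistributiveSubalgebra D₁) (h₂ : IsDistributiveSubalgebra D₂) :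
    IsDistributiveSubalgebra (prodClass D₁ D₂) where
  comp_mem := by
    rintro _ ⟨R₁, hR₁, R₂, hR₂, rfl⟩ _ ⟨S₁, hS₁, S₂, hS₂, rfl⟩
    exact ⟨_, h₁.comp_mem R₁ hR₁ S₁ hS₁, _, h₂.comp_mem R₂ hR₂ S₂ hS₂, prodRel_comp_prodRel ..⟩
  inv_mem := by
    rintro _ ⟨R₁, hR₁, R₂, hR₂, rfl⟩
    exact ⟨_, h₁.inv_mem R₁ hR₁, _, h₂.inv_mem R₂ hR₂, inv_prodRel ..⟩
  inter_mem := by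
    rintro _ ⟨R₁, hR₁, R₂, hR₂, rfl⟩ _ ⟨S₁, hS₁, S₂, hS₂, rfl⟩
    exact ⟨_, h₁.inter_mem R₁ hR₁ S₁ hS₁, _, h₂.inter_mem R₂ hR₂ S₂ hS₂,
      prodRel_inter_prodRel ..⟩
  comp_inter := by
    rintro _ ⟨R₁, hR₁, R₂, hR₂, rfl⟩ _ ⟨S₁, hS₁, S₂, hS₂, rfl⟩ _ ⟨T₁, hT₁, T₂, hT₂, rfl⟩ hne
    rw [prodRel_inter_prodRel] at hne ⊢
    obtain ⟨hne₁, hne₂⟩ := nonempty_of_prodRel_nonempty hne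
    simp only [prodRel_comp_prodRel, prodRel_inter_prodRel,
      h₁.comp_inter R₁ hR₁ S₁ hS₁ T₁ hT₁ hne₁, h₂.comp_inter R₂ hR₂ S₂ hS₂ T₂ hT₂ hne₂]
  inter_comp := by
    rintro _ ⟨R₁, hR₁, R₂, hR₂, rfl⟩ _ ⟨S₁, hS₁, S₂, hS₂, rfl⟩ _ ⟨T₁, hT₁, T₂, hT₂, rfl⟩ hne
    rw [prodRel_inter_prodRel] at hne ⊢
    obtain ⟨hne₁, hne₂⟩ := nonempty_of_prodRel_nonempty hne
    simp only [prodRel_comp_prodRel, prodRel_inter_prodRel,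
      h₁.inter_comp R₁ hR₁ S₁ hS₁ T₁ hT₁ hne₁, h₂.inter_comp R₂ hR₂ S₂ hS₂ T₂ hT₂ hne₂]

end CRA

/-- each of the four product subclasses C_PA⊗C_PA, C_PA⊗S_PA,
S_PA⊗C_PA, S_PA⊗S_PA of the Cardinal Relation Algebra is closed under
composition, converse and intersection, and composition distributes over
nonempty intersections of its elements. -/
theorem CRA_four_maximal_distributive_subalgebras :
    ∀ D₁ ∈ ({CPA, SPA} : Set (Set (Set (ℝ × ℝ)))),
    ∀ D₂ ∈ ({CPA, SPA} : Set (Set (Set (ℝ × ℝ)))),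
      (∀ R ∈ CRA.prodClass D₁ D₂, ∀ S ∈ CRA.prodClass D₁ D₂,
        CRA.comp R S ∈ CRA.prodClass D₁ D₂) ∧
      (∀ R ∈ CRA.prodClass D₁ D₂, CRA.conv R ∈ CRA.prodClass D₁ D₂) ∧
      (∀ R ∈ CRA.prodClass D₁ D₂, ∀ S ∈ CRA.prodClass D₁ D₂,
        R ∩ S ∈ CRA.prodClass D₁ D₂) ∧
      (∀ R ∈ CRA.prodClass D₁ D₂, ∀ S ∈ CRA.prodClass D₁ D₂,
        ∀ T ∈ CRA.prodClass D₁ D₂, S ∩ T ≠ ∅ →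
          CRA.comp R (S ∩ T) = CRA.comp R S ∩ CRA.comp R T ∧
          CRA.comp (S ∩ T) R = CRA.comp S R ∩ CRA.comp T R) := by
  have hPA : ∀ D ∈ ({CPA, SPA} : Set (Set (Set (ℝ × ℝ)))), IsDistributiveSubalgebra D := by
    rintro D (rfl | rfl)
    exacts [PA.isDistributiveSubalgebra_CPA, PA.isDistributiveSubalgebra_SPA]
  intro D₁ hD₁ D₂ hD₂
  have h := CRA.isDistributiveSubalgebra_prodClass (hPA D₁ hD₁) (hPA D₂ hD₂)
  -- `CRA.comp` and `CRA.conv` are `SetRel.comp` and `SetRel.inv` on `ℝ × ℝ` by definition.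
  refine ⟨h.comp_mem, h.inv_mem, h.inter_mem, fun R hR S hS T hT hne => ?_⟩
  have hne' : (S ∩ T).Nonempty := Set.nonempty_iff_ne_empty.mpr hne
  exact ⟨h.comp_inter R hR S hS T hT hne', h.inter_comp R hR S hS T hT hne'⟩
end
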